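/- χ_1^{(n)} = C_{n-1}, χ_{n-1}^{(n)} = n-1, χ_n^{(n)} = 1, and for k ∈ [2, n-1], χ_k^{(n)} = χ_{k-1}^{(n-1)} + χ_{k+1}^{(n)}. -/

import Mathlib

open Finset

/-- `l` encodes a (non-degenerate) indexing matrix on `n` points: the columns,
listed left to right, as pairs `(top entry, bottom entry)`.  Entries lie in
`[0, n-1]`, the first row is strictly increasing, the second row is weakly
increasing, repeated second-row entries are `0`, and each top entry is at
least the corresponding bottom entry. -/
def IsIndexingMatrix (n : ℕ) (l : List (ℕ × ℕ)) : Prop :=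
  1 ≤ l.length ∧ l.length ≤ n ∧
  (∀ p ∈ l, p.1 < n ∧ p.2 ≤ p.1) ∧
  l.Pairwise (fun p q => p.1 < q.1 ∧ p.2 ≤ q.2 ∧ (p.2 = q.2 → p.2 = 0))

/-- A positive indexing matrix: all entries are positive. -/
def IsPositiveIndexingMatrix (n : ℕ) (l : List (ℕ × ℕ)) : Prop :=
  IsIndexingMatrix n l ∧ ∀ p ∈ l, 0 < p.1 ∧ 0 < p.2

/-- `θ_k^{(n)}`: the number of positive indexing matrices whose `(1,1)` entry
equals `k`. -/
noncomputable def theta (n k : ℕ) : ℕ :=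
  Nat.card {l : List (ℕ × ℕ) //
    IsPositiveIndexingMatrix n l ∧ l.head?.map Prod.fst = some k}

/-- The blob-rank of an indexing matrix: the number of its columns containing
a `0`. -/
def blobRank (l : List (ℕ × ℕ)) : ℕ := l.countP (fun p => p.1 == 0 || p.2 == 0)

/-- `Ω_r^{(n)}`: the number of indexing matrices on `n` points of blob-rank `r`,
the degenerate indexing matrix being counted in `Ω_0^{(n)}`. -/
noncomputable def Omega (n r : ℕ) : ℕ :=
  Nat.card {l : List (ℕ × ℕ) // IsIndexingMatrix n l ∧ blobRank l = r} +
    (if r = 0 then 1 else 0)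

/-- `χ_k^{(n)} = Σ_{i₁+⋯+i_k = n-k} C_{i₁} ⋯ C_{i_k}` (Catalan numbers). -/
def chi (n k : ℕ) : ℕ :=
  ∑ t ∈ Finset.Nat.antidiagonalTuple k (n - k), ∏ j, catalan (t j)

/-- A Temperley–Lieb diagram on `n` points: a non-crossing perfect matching of
`2n` boundary points numbered clockwise, given by a fixed-point free
involution. -/
structure TLDiagram (n : ℕ) where
  f : Fin (2 * n) → Fin (2 * n)
  involutive : ∀ x, f (f x) = x
  noFixedPoint : ∀ x, f x ≠ x
  noncrossing : ∀ a b : Fin (2 * n), a < b → b < f a → f a < f b → False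

/-- `a` is the left (smaller) endpoint of an arc of `D`. -/
def TLDiagram.IsArc {n : ℕ} (D : TLDiagram n) (a : Fin (2 * n)) : Prop :=
  a < D.f a

/-- The arc with left endpoint `a` is exposed to the left side of the diagram,
i.e. it is not nested inside any other arc. -/
def TLDiagram.IsExposed {n : ℕ} (D : TLDiagram n) (a : Fin (2 * n)) : Prop :=
  a < D.f a ∧ ∀ c, ¬ (c < a ∧ D.f a < D.f c)

/-- The number of arcs of `D` exposed to the left side. -/
noncomputable def exposedCount {n : ℕ} (D : TLDiagram n) : ℕ :=
  Nat.card {a : Fin (2 * n) // D.IsExposed a}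

/-- A `d`-abacus blob diagram on `n` points: a TL-diagram together with blobs
on some arcs exposed to the left, one bead count in `ℤ/dℤ` on every arc, and
an extra bead count on every blobbed arc (its second component). -/
structure AbacusBlobDiagram (d n : ℕ) where
  base : TLDiagram n
  blob : Fin (2 * n) → Bool
  blob_exposed : ∀ a, blob a = true → base.IsExposed a
  beads₁ : Fin (2 * n) → ZMod d
  beads₂ : Fin (2 * n) → ZMod d
  beads₁_arc : ∀ a, ¬ base.IsArc a → beads₁ a = 0
  beads₂_blob : ∀ a, blob a = false → beads₂ a = 0

/-- A `d`-abacus hook diagram on `n` points: a blobbed TL-diagram in which all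
blobbed arcs are merged into the single hook component through `0, 0'`, with a
bead count in `ℤ/dℤ` on every unblobbed arc and one on the hook component. -/
structure AbacusHookDiagram (d n : ℕ) where
  base : TLDiagram n
  blob : Fin (2 * n) → Bool
  blob_exposed : ∀ a, blob a = true → base.IsExposed a
  beads : Fin (2 * n) → ZMod d
  beads_arc : ∀ a, ¬ base.IsArc a ∨ blob a = true → beads a = 0
  hookBeads : ZMod d

/-! `χ_k^{(n)}` is the coefficient of `X^(n-k)` in `C^k`, where `C = Σ catalan m X^m`.
Multiplying the functional equation `C = 1 + X C²` by `C^(k-1)` gives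
`C^k = C^(k-1) + X C^(k+1)`, which is the recurrence; the boundary values come from
`C = 1 + X + ⋯`. -/

open PowerSeries

theorem PowerSeries.coeff_mk_pow {R : Type*} [CommSemiring R] (f : ℕ → R) (k m : ℕ) :
    coeff m (mk f ^ k) = ∑ t ∈ Finset.Nat.antidiagonalTuple k m, ∏ j, f (t j) := by
  rw [← Fin.prod_const, coeff_prod, finsuppAntidiag, sum_map,
    ← piAntidiag_univ_fin_eq_antidiagonalTuple, ← sum_attach (piAntidiag univ m)]
  simp

theorem chi_eq_coeff_catalanSeries_pow (n k : ℕ) :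
    chi n k = coeff (n - k) (catalanSeries ^ k) :=
  (coeff_mk_pow catalan k (n - k)).symm

theorem catalanSeries_pow_succ (k : ℕ) :
    catalanSeries ^ (k + 1) = catalanSeries ^ k + X * catalanSeries ^ (k + 2) := by
  calc catalanSeries ^ (k + 1) = catalanSeries ^ k * (catalanSeries ^ 2 * X + 1) := by
        rw [catalanSeries_sq_mul_X_add_one, pow_succ]
    _ = catalanSeries ^ k + X * catalanSeries ^ (k + 2) := by ring

theorem chi_one (n : ℕ) : chi (n + 1) 1 = catalan n := by
  simp [chi_eq_coeff_catalanSeries_pow]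

theorem chi_self (n : ℕ) : chi n n = 1 := by
  simp [chi_eq_coeff_catalanSeries_pow]

theorem chi_succ_self (n : ℕ) : chi (n + 1) n = n := by
  simp [chi_eq_coeff_catalanSeries_pow, coeff_one_pow]

theorem chi_succ_succ {n k : ℕ} (hk : k < n) :
    chi (n + 1) (k + 1) = chi n k + chi (n + 1) (k + 2) := by
  obtain ⟨m, rfl⟩ := Nat.exists_eq_add_of_lt hk
  have h₁ : k + m + 1 + 1 - (k + 1) = m + 1 := by omega
  have h₂ : k + m + 1 - k = m + 1 := by omega
  have h₃ : k + m + 1 + 1 - (k + 2) = m := by omega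
  simp only [chi_eq_coeff_catalanSeries_pow, h₁, h₂, h₃]
  rw [catalanSeries_pow_succ, map_add, coeff_succ_X_mul]

/-- `χ_1^{(n)} = C_{n-1}`, `χ_{n-1}^{(n)} = n-1`,
`χ_n^{(n)} = 1`, and `χ_k^{(n)} = χ_{k-1}^{(n-1)} + χ_{k+1}^{(n)}` for
`k ∈ [2, n-1]`. -/
theorem stmt12 (n : ℕ) (hn : 1 ≤ n) :
    chi n 1 = catalan (n - 1) ∧ chi n (n - 1) = n - 1 ∧ chi n n = 1 ∧
      ∀ k, 2 ≤ k → k ≤ n - 1 → chi n k = chi (n - 1) (k - 1) + chi n (k + 1) := by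
  obtain ⟨m, rfl⟩ := Nat.exists_eq_add_of_le' hn
  refine ⟨chi_one m, chi_succ_self m, chi_self _, fun k hk2 hkm => ?_⟩
  obtain ⟨j, rfl⟩ := Nat.exists_eq_add_of_le' (one_le_two.trans hk2)
  exact chi_succ_succ (by omega)
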